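/- arXiv:cond-mat/0004104 — 2 statements merged into one kernel-verified Lean document; each statement's English description precedes it below -/
import Mathlib

section
/- For every rational number ρ = p/q in [1/3, 2/5] with p, q coprime positive integers, there exists a cyclic binary sequence of length q with exactly p ones such that every gap between consecutive ones (cyclically) is 2 or 3 and no two cyclically consecutive gaps both equal 2. -/
/-! A period of `p` gaps from `{2, 3}` summing to `q` has exactly `k = 3p - q` gaps equal to `2`,
and `p/q ∈ [1/3, 2/5]` says precisely `0 ≤ k` and `2k ≤ p`. Placing the `2`s as evenly as
possible, at the letters `1` of the mechanical word `⌊(i + 1) k / p⌋ - ⌊i k / p⌋`, keeps any two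
of them apart, since a slope `k / p ≤ 1/2` cannot raise the floor twice in two steps. -/

open Finset

namespace Nat

lemma add_mul_div_le_mul_div_add_one {p j k : ℕ} (hp : 0 < p) (h : j * k ≤ p) (i : ℕ) :
    (i + j) * k / p ≤ i * k / p + 1 :=
  calc (i + j) * k / p ≤ (i * k + p) / p := Nat.div_le_div_right (by rw [add_mul]; omega)
    _ = i * k / p + 1 := Nat.add_div_right _ hp

lemma mul_div_monotone (k p : ℕ) : Monotone fun i => i * k / p :=
  fun _ _ hij => Nat.div_le_div_right (Nat.mul_le_mul_right _ hij)

end Nat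

-- The lower mechanical (Sturmian) word of slope `k / p`.
def mechanicalWord (k p i : ℕ) : ℕ := (i + 1) * k / p - i * k / p

section mechanicalWord

variable {k p : ℕ}

lemma mechanicalWord_add_period (hp : 0 < p) (i : ℕ) :
    mechanicalWord k p (i + p) = mechanicalWord k p i := by
  have shift : ∀ j, (j + p) * k / p = j * k / p + k := fun j => by
    rw [add_mul, Nat.add_mul_div_left _ _ hp]
  rw [mechanicalWord, mechanicalWord, add_right_comm, shift, shift]
  omega

lemma mechanicalWord_le_one (hp : 0 < p) (hkp : k ≤ p) (i : ℕ) : mechanicalWord k p i ≤ 1 := by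
  have := Nat.add_mul_div_le_mul_div_add_one hp (j := 1) (k := k) (by omega) i
  unfold mechanicalWord
  omega

lemma sum_range_mechanicalWord (n : ℕ) :
    ∑ i ∈ range n, mechanicalWord k p i = n * k / p := by
  simpa [mechanicalWord] using sum_range_tsub (Nat.mul_div_monotone k p) n

lemma not_mechanicalWord_eq_one_and_succ (hp : 0 < p) (h2k : 2 * k ≤ p) (i : ℕ) :
    ¬(mechanicalWord k p i = 1 ∧ mechanicalWord k p (i + 1) = 1) := by
  have hmono := Nat.mul_div_monotone k p (Nat.le_succ i)
  have hstep := Nat.add_mul_div_le_mul_div_add_one hp h2k i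
  simp only [mechanicalWord, add_assoc, one_add_one_eq_two] at hmono hstep ⊢
  omega

end mechanicalWord

theorem exists_correctly_spaced_general (p q : ℕ) (hp : 0 < p) (hq : 0 < q)
    (hlow : (1 : ℚ) / 3 ≤ (p : ℚ) / q) (hhigh : (p : ℚ) / q ≤ 2 / 5) :
    ∃ g : ℕ → ℕ, (∀ i, g (i + p) = g i) ∧ (∀ i, g i = 2 ∨ g i = 3) ∧
      (∑ i ∈ Finset.range p, g i) = q ∧
      (∀ i, ¬(g i = 2 ∧ g (i + 1) = 2)) := by
  have hq' : (0 : ℚ) < q := by exact_mod_cast hq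
  have hq3p : q ≤ 3 * p := by
    rw [div_le_div_iff₀ (by norm_num) hq'] at hlow
    exact_mod_cast (by linarith : (q : ℚ) ≤ 3 * p)
  have h5p : 5 * p ≤ 2 * q := by
    rw [div_le_div_iff₀ hq' (by norm_num)] at hhigh
    exact_mod_cast (by linarith : (5 * p : ℚ) ≤ 2 * q)
  set k := 3 * p - q
  have h2k : 2 * k ≤ p := by omega
  have hw := mechanicalWord_le_one (k := k) hp (by omega)
  refine ⟨fun i => 3 - mechanicalWord k p i, fun i => ?_, fun i => ?_, ?_, fun i => ?_⟩
  · simp only [mechanicalWord_add_period hp]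
  · have := hw i
    dsimp only
    omega
  · rw [sum_tsub_distrib _ fun i _ => (hw i).trans (by norm_num), sum_range_mechanicalWord,
      Nat.mul_div_cancel_left _ hp, sum_const, card_range, smul_eq_mul]
    omega
  · have := not_mechanicalWord_eq_one_and_succ hp h2k i
    have := hw i
    have := hw (i + 1)
    dsimp only
    omega

/-- For every rational `p/q ∈ [1/3, 2/5]` with `p, q` coprime positive
integers, there is a cyclic binary sequence of length `q` with exactly `p`
ones whose gaps between cyclically consecutive ones are all `2` or `3`, and
no two cyclically consecutive gaps both equal `2`.  Equivalently (encoding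
the sequence by its cyclic gap sequence): there is a `p`-periodic gap
sequence with values in `{2,3}`, total `q` over one period, and no two
consecutive gaps equal to `2`. -/
theorem exists_correctly_spaced (p q : ℕ) (hp : 0 < p) (hq : 0 < q)
    (hcop : Nat.Coprime p q)
    (hlow : (1 : ℚ) / 3 ≤ (p : ℚ) / q) (hhigh : (p : ℚ) / q ≤ 2 / 5) :
    ∃ g : ℕ → ℕ, (∀ i, g (i + p) = g i) ∧ (∀ i, g i = 2 ∨ g i = 3) ∧
      (∑ i ∈ Finset.range p, g i) = q ∧
      (∀ i, ¬(g i = 2 ∧ g (i + 1) = 2)) :=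
  exists_correctly_spaced_general p q hp hq hlow hhigh
end

section
/- Let g_1, ..., g_n (n ≥ 2) be a cyclic sequence of gaps with each g_i ∈ {2, 3}, such that the density n/(Σ g_i) is at most 2/5. If two cyclically consecutive gaps both equal 2, then two cyclically consecutive gaps both equal 3. -/
/-!
If no two cyclically consecutive gaps were both `3`, every cyclic pair `g i + g (i + 1)` would
be at most `5`, and the pair of consecutive `2`s would be `4 < 5`. Each gap occurs in exactly two
of the `n` cyclic pairs, so summing gives `2 Σ g < 5 n`, i.e. density `n / Σ g > 2/5`.
-/

open Finset Function

theorem Function.Periodic.sum_range_comp_succ {M : Type*} [AddCancelCommMonoid M]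
    {f : ℕ → M} {n : ℕ} (hf : Periodic f n) :
    ∑ i ∈ range n, f (i + 1) = ∑ i ∈ range n, f i := by
  have hlast : f n = f 0 := by simpa using hf 0
  have h := (sum_range_succ' f n).symm.trans (sum_range_succ f n)
  rwa [hlast, add_left_inj] at h

theorem Function.Periodic.exists_adjacent_mod {α : Type*} {f : ℕ → α} {n : ℕ}
    (hf : Periodic f n) (hn : 0 < n) (i : ℕ) : ∃ j < n, f j = f i ∧ f (j + 1) = f (i + 1) :=
  ⟨i % n, Nat.mod_lt i hn, hf.map_mod_nat i, by
    rw [← hf.map_mod_nat, Nat.mod_add_mod, hf.map_mod_nat]⟩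

theorem Function.Periodic.two_mul_sum_range_lt {f : ℕ → ℕ} {n c : ℕ} (hf : Periodic f n)
    (hn : 0 < n) (hle : ∀ k, f k + f (k + 1) ≤ c) (hlt : ∃ i, f i + f (i + 1) < c) :
    2 * ∑ k ∈ range n, f k < n * c := by
  obtain ⟨i, hi⟩ := hlt
  obtain ⟨j, hjn, hj, hj'⟩ := hf.exists_adjacent_mod hn i
  calc 2 * ∑ k ∈ range n, f k = ∑ k ∈ range n, (f k + f (k + 1)) := by
        rw [sum_add_distrib, hf.sum_range_comp_succ, two_mul]
    _ < ∑ _k ∈ range n, c :=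
        sum_lt_sum (fun k _ ↦ hle k) ⟨j, mem_range.mpr hjn, by rwa [hj, hj']⟩
    _ = n * c := by rw [sum_const, card_range, smul_eq_mul]

/-- Let `g 0, …, g (n-1)` (`n ≥ 2`) be a cyclic sequence of gaps (encoded
as an `n`-periodic function) with each gap in `{2, 3}` and density
`n / Σ g ≤ 2/5`.  If two cyclically consecutive gaps both equal `2`, then
two cyclically consecutive gaps both equal `3`. -/
theorem consecutive_two_gaps_implies_consecutive_three_gaps
    (n : ℕ) (hn : 2 ≤ n) (g : ℕ → ℕ)
    (hper : ∀ i, g (i + n) = g i)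
    (hval : ∀ i, g i = 2 ∨ g i = 3)
    (hdens : (n : ℚ) / (∑ i ∈ Finset.range n, (g i : ℚ)) ≤ 2 / 5)
    (h22 : ∃ i, g i = 2 ∧ g (i + 1) = 2) :
    ∃ j, g j = 3 ∧ g (j + 1) = 3 := by
  by_contra! h33
  have hpair : ∀ k, g k + g (k + 1) ≤ 5 := fun k ↦ by
    have := h33 k
    rcases hval k with h | h <;> rcases hval (k + 1) with h' | h' <;> omega
  obtain ⟨i, hi, hi'⟩ := h22
  have hsum_lt : 2 * ∑ k ∈ range n, g k < n * 5 :=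
    Periodic.two_mul_sum_range_lt hper (by omega) hpair ⟨i, by omega⟩
  have hsum_pos : (0 : ℚ) < ∑ k ∈ range n, (g k : ℚ) := by
    refine sum_pos (fun k _ ↦ ?_) (nonempty_range_iff.mpr (by omega))
    rcases hval k with h | h <;> simp [h]
  rw [div_le_div_iff₀ hsum_pos (by norm_num)] at hdens
  have hsum_ge : n * 5 ≤ 2 * ∑ k ∈ range n, g k := by exact_mod_cast hdens
  omega
end
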